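/- Let B be a skew-symmetric n×n integer matrix and suppose the index set {1,...,n} is partitioned into two disjoint sets S and T such that an integer k > 1 divides b_{ij} whenever i ∈ S and j ∈ T. Then after mutating B at any index m, the resulting matrix B' = μ_m(B) still satisfies: k divides b'_{ij} for all i ∈ S, j ∈ T. (I.e., the property of being a k-partition is preserved by mutation.) -/

import Mathlib

/-- Matrix mutation of an integer matrix `B` at index `m`. -/
def matrixMutation {n : ℕ} (m : Fin n) (B : Matrix (Fin n) (Fin n) ℤ) :
    Matrix (Fin n) (Fin n) ℤ :=
  fun i j =>
    if i = m ∨ j = m then -B i j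
    else if B i m * B m j > 0 then B i j + B i m * |B m j|
    else B i j

theorem dvd_matrixMutation_apply {n : ℕ} {k : ℤ} {B : Matrix (Fin n) (Fin n) ℤ} {m i j : Fin n}
    (hij : k ∣ B i j) (hm : k ∣ B i m ∨ k ∣ B m j) : k ∣ matrixMutation m B i j := by
  have hcorr : k ∣ B i m * |B m j| := by
    rcases hm with him | hmj
    · exact him.mul_right _
    · exact ((dvd_abs k _).mpr hmj).mul_left _
  unfold matrixMutation
  split_ifs
  · exact hij.neg_right
  · exact dvd_add hij hcorr
  · exact hij

theorem kPartition_preserved_by_mutation_general {n : ℕ}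
    (B : Matrix (Fin n) (Fin n) ℤ)
    (S T : Set (Fin n)) (hunion : S ∪ T = Set.univ)
    (k : ℤ)
    (hdiv : ∀ i ∈ S, ∀ j ∈ T, k ∣ B i j)
    (m : Fin n) :
    ∀ i ∈ S, ∀ j ∈ T, k ∣ matrixMutation m B i j := by
  intro i hi j hj
  have hm : m ∈ S ∪ T := hunion ▸ Set.mem_univ m
  refine dvd_matrixMutation_apply (hdiv i hi j hj) ?_
  rcases hm with hmS | hmT
  · exact Or.inr (hdiv m hmS j hj)
  · exact Or.inl (hdiv i hi m hmT)

theorem kPartition_preserved_by_mutation {n : ℕ}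
    (B : Matrix (Fin n) (Fin n) ℤ) (hB : ∀ i j, B j i = -B i j)
    (S T : Set (Fin n)) (hdisj : Disjoint S T) (hunion : S ∪ T = Set.univ)
    (k : ℤ) (hk : 1 < k)
    (hdiv : ∀ i ∈ S, ∀ j ∈ T, k ∣ B i j)
    (m : Fin n) :
    ∀ i ∈ S, ∀ j ∈ T, k ∣ matrixMutation m B i j :=
  kPartition_preserved_by_mutation_general B S T hunion k hdiv m
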